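/- arXiv:2109.03844 — 3 statements merged into one kernel-verified Lean document; each statement's English description precedes it below -/
import Mathlib

section
/- Let Z₁ and Z₂ be independent standard normal random variables, let δ ∈ (−1,1) and set λ = δ/√(1−δ²). Then the random variable X = δ|Z₁| + √(1−δ²) Z₂ has the skew-normal density 2φ(x)Φ(λx); that is, for every t ∈ ℝ, P(X ≤ t) = ∫_{−∞}^t 2 φ(x) Φ(λ x) dx. -/
open Real MeasureTheory Set ProbabilityTheory

/-- Standard normal PDF. -/
noncomputable def stdPhi (x : ℝ) : ℝ := (Real.sqrt (2 * Real.pi))⁻¹ * Real.exp (-x ^ 2 / 2)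

/-- Standard normal CDF. -/
noncomputable def stdPhiCDF (x : ℝ) : ℝ := ∫ t in Set.Iic x, stdPhi t

open scoped ENNReal

/-! The pair (Z₁, Z₂) has the rotation-invariant law N(0,1) ⊗ N(0,1). Reflecting the first
coordinate shows P(δ|Z₁| + √(1-δ²) Z₂ ≤ t) = 2 P(Z₁ ≥ 0, δZ₁ + √(1-δ²) Z₂ ≤ t). The rotation
(U, V) = (δZ₁ + √(1-δ²) Z₂, -√(1-δ²) Z₁ + δZ₂) turns the event {Z₁ ≥ 0} into {V ≤ λU}, and
(U, V) is again a pair of independent standard normals, so the probability is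
2 P(U ≤ t, V ≤ λU) = ∫_{-∞}^t 2φ(u)Φ(λu) du. -/

lemma stdPhi_eq_gaussianPDFReal : stdPhi = gaussianPDFReal 0 1 := by
  funext x
  simp [stdPhi, gaussianPDFReal]

lemma stdPhiCDF_eq_cdf_gaussianReal : stdPhiCDF = cdf (gaussianReal 0 1) := by
  funext x
  rw [cdf_eq_real, measureReal_def, gaussianReal_apply_eq_integral 0 one_ne_zero,
    ENNReal.toReal_ofReal (integral_nonneg fun _ => gaussianPDFReal_nonneg 0 1 _), stdPhiCDF,
    stdPhi_eq_gaussianPDFReal]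

lemma MeasureTheory.MeasurePreserving.withDensity_comp {α β : Type*} [MeasurableSpace α]
    [MeasurableSpace β] {μ : Measure α} {ν : Measure β} {G : α → β} (hG : MeasurePreserving G μ ν)
    {g : β → ℝ≥0∞} (hg : Measurable g) :
    MeasurePreserving G (μ.withDensity (g ∘ G)) (ν.withDensity g) := by
  refine ⟨hG.measurable, Measure.ext fun s hs => ?_⟩
  rw [Measure.map_apply hG.measurable hs, withDensity_apply _ (hG.measurable hs),
    withDensity_apply _ hs]
  exact hG.setLIntegral_comp_preimage hs hg

lemma measurePreserving_linear_of_abs_det_eq_one {a b c d : ℝ} (h : |a * d - b * c| = 1) :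
    MeasurePreserving (fun p : ℝ × ℝ => (a * p.1 + b * p.2, c * p.1 + d * p.2))
      volume volume := by
  set f := Matrix.toLin (Module.Basis.finTwoProd ℝ) (Module.Basis.finTwoProd ℝ) !![a, b; c, d]
  have hdet : LinearMap.det f = a * d - b * c := by
    rw [LinearMap.det_toLin, Matrix.det_fin_two_of]
  have hf : (fun p : ℝ × ℝ => (a * p.1 + b * p.2, c * p.1 + d * p.2)) = f := by
    funext p
    rw [Matrix.toLin_finTwoProd_apply]
  have hdet_ne : LinearMap.det f ≠ 0 := by
    rw [hdet]; rintro h0; simp [h0] at h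
  rw [hf]
  refine ⟨f.continuous_of_finiteDimensional.measurable, ?_⟩
  rw [Measure.map_linearMap_addHaar_eq_smul_addHaar _ hdet_ne, hdet, abs_inv, h, inv_one,
    ENNReal.ofReal_one, one_smul]

lemma gaussianReal_prod_eq_withDensity :
    (gaussianReal 0 1).prod (gaussianReal 0 1)
      = volume.withDensity fun p : ℝ × ℝ =>
          ENNReal.ofReal ((2 * π)⁻¹ * exp (-(p.1 ^ 2 + p.2 ^ 2) / 2)) := by
  rw [gaussianReal_of_var_ne_zero 0 one_ne_zero,
    prod_withDensity (measurable_gaussianPDF 0 1) (measurable_gaussianPDF 0 1),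
    ← Measure.volume_eq_prod]
  congr 1
  funext p
  rw [gaussianPDF, gaussianPDF, ← ENNReal.ofReal_mul (gaussianPDFReal_nonneg 0 1 _)]
  congr 1
  have h2π : Real.sqrt (2 * π) ^ 2 = 2 * π := Real.sq_sqrt (by positivity)
  simp only [gaussianPDFReal, NNReal.coe_one, mul_one, sub_zero]
  rw [mul_mul_mul_comm, ← Real.exp_add, ← mul_inv, ← sq, h2π]
  ring_nf

lemma measurePreserving_rotation_gaussianReal_prod {a b : ℝ} (hab : a ^ 2 + b ^ 2 = 1) :
    MeasurePreserving (fun p : ℝ × ℝ => (a * p.1 + b * p.2, -b * p.1 + a * p.2))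
      ((gaussianReal 0 1).prod (gaussianReal 0 1))
      ((gaussianReal 0 1).prod (gaussianReal 0 1)) := by
  have hvol := measurePreserving_linear_of_abs_det_eq_one (a := a) (b := b) (c := -b) (d := a)
    (by rw [show a * a - b * -b = 1 by linear_combination hab, abs_one])
  rw [gaussianReal_prod_eq_withDensity]
  have hdensity := hvol.withDensity_comp (g := fun p : ℝ × ℝ =>
    ENNReal.ofReal ((2 * π)⁻¹ * exp (-(p.1 ^ 2 + p.2 ^ 2) / 2))) (by fun_prop)
  have hρ_invariant : ∀ p : ℝ × ℝ, (a * p.1 + b * p.2) ^ 2 + (-b * p.1 + a * p.2) ^ 2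
      = p.1 ^ 2 + p.2 ^ 2 := fun p => by linear_combination (p.1 ^ 2 + p.2 ^ 2) * hab
  simpa only [Function.comp_def, hρ_invariant] using hdensity

lemma measurePreserving_neg_fst_gaussianReal_prod :
    MeasurePreserving (fun p : ℝ × ℝ => (-p.1, p.2))
      ((gaussianReal 0 1).prod (gaussianReal 0 1))
      ((gaussianReal 0 1).prod (gaussianReal 0 1)) := by
  have hneg : MeasurePreserving (fun x : ℝ => -x) (gaussianReal 0 1) (gaussianReal 0 1) :=
    ⟨measurable_neg, by rw [gaussianReal_map_neg, neg_zero]⟩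
  exact hneg.prod (MeasurePreserving.id _)

lemma gaussianReal_prod_setOf_fst_eq_zero :
    (gaussianReal 0 1).prod (gaussianReal 0 1) {p : ℝ × ℝ | p.1 = 0} = 0 := by
  rw [show {p : ℝ × ℝ | p.1 = 0} = {0} ×ˢ univ by ext; simp, Measure.prod_prod,
    (nullSingletonClass_gaussianReal one_ne_zero).measure_singleton, zero_mul]

lemma measure_eq_two_mul_inter_fst_nonneg {ν : Measure (ℝ × ℝ)}
    (hν : MeasurePreserving (fun p : ℝ × ℝ => (-p.1, p.2)) ν ν)
    (hν₀ : ν {p | p.1 = 0} = 0) {S : Set (ℝ × ℝ)} (hS : MeasurableSet S)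
    (hS_symm : ∀ p : ℝ × ℝ, (-p.1, p.2) ∈ S ↔ p ∈ S) :
    ν S = 2 * ν (S ∩ {p | 0 ≤ p.1}) := by
  have hH : MeasurableSet {p : ℝ × ℝ | 0 ≤ p.1} := measurableSet_le measurable_const measurable_fst
  have hpos : ν (S ∩ {p | 0 < p.1}) = ν (S ∩ {p | 0 ≤ p.1}) := by
    refine le_antisymm (measure_mono fun p hp => ⟨hp.1, (show 0 < p.1 from hp.2).le⟩) ?_
    calc ν (S ∩ {p | 0 ≤ p.1}) ≤ ν (S ∩ {p | 0 < p.1} ∪ {p | p.1 = 0}) := by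
          refine measure_mono fun p ⟨hpS, hp⟩ => ?_
          rcases (show 0 ≤ p.1 from hp).lt_or_eq with h | h
          exacts [Or.inl ⟨hpS, h⟩, Or.inr h.symm]
      _ ≤ ν (S ∩ {p | 0 < p.1}) := by
          simpa [hν₀] using measure_union_le (μ := ν) (S ∩ {p | 0 < p.1}) {p | p.1 = 0}
  have hneg : ν (S \ {p | 0 ≤ p.1}) = ν (S ∩ {p | 0 < p.1}) := by
    rw [← hν.measure_preimage (hS.diff hH).nullMeasurableSet]
    congr 1
    ext p
    simp [hS_symm]
  rw [← measure_inter_add_sdiff S hH, hneg, hpos, two_mul]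

lemma measurableSet_setOf_fst_mem_snd_le {α : Type*} [MeasurableSpace α] {s : Set α}
    (hs : MeasurableSet s) {g : α → ℝ} (hg : Measurable g) :
    MeasurableSet {p : α × ℝ | p.1 ∈ s ∧ p.2 ≤ g p.1} :=
  (measurable_fst hs).inter (measurableSet_le measurable_snd (hg.comp measurable_fst))

lemma MeasureTheory.Measure.prod_setOf_fst_mem_snd_le {α : Type*} [MeasurableSpace α]
    (μ : Measure α) (ν : Measure ℝ) [SFinite ν] {s : Set α} (hs : MeasurableSet s) {g : α → ℝ}
    (hg : Measurable g) :
    μ.prod ν {p | p.1 ∈ s ∧ p.2 ≤ g p.1} = ∫⁻ x in s, ν (Iic (g x)) ∂μ := by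
  rw [Measure.prod_apply (measurableSet_setOf_fst_mem_snd_le hs hg), ← lintegral_indicator hs]
  refine lintegral_congr fun x => ?_
  by_cases hx : x ∈ s <;> simp [hx, Set.indicator, Iic_def]

lemma setOf_abs_fst_le_inter_eq_preimage_rotation {a b t : ℝ} (hb : 0 < b)
    (hab : a ^ 2 + b ^ 2 = 1) :
    {p : ℝ × ℝ | a * |p.1| + b * p.2 ≤ t} ∩ {p | 0 ≤ p.1}
      = (fun p : ℝ × ℝ => (a * p.1 + b * p.2, -b * p.1 + a * p.2)) ⁻¹'
          {q | q.1 ∈ Iic t ∧ q.2 ≤ a / b * q.1} := by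
  ext p
  have hkey : -b * p.1 + a * p.2 ≤ a / b * (a * p.1 + b * p.2) ↔ 0 ≤ p.1 := by
    rw [div_mul_eq_mul_div, le_div_iff₀ hb]
    constructor <;> intro h <;> nlinarith
  simp only [mem_inter_iff, mem_ofPred_eq, mem_preimage, mem_Iic, hkey]
  constructor
  · rintro ⟨h, hp⟩
    exact ⟨by rwa [abs_of_nonneg hp] at h, hp⟩
  · rintro ⟨h, hp⟩
    exact ⟨by rwa [abs_of_nonneg hp], hp⟩

lemma ofReal_setIntegral_two_mul_stdPhi_mul_stdPhiCDF (lam : ℝ) {s : Set ℝ}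
    (hs : MeasurableSet s) :
    ENNReal.ofReal (∫ x in s, 2 * stdPhi x * stdPhiCDF (lam * x))
      = 2 * ∫⁻ x in s, gaussianReal 0 1 (Iic (lam * x)) ∂gaussianReal 0 1 := by
  have hΦ : Measurable fun x => stdPhiCDF (lam * x) := by
    rw [stdPhiCDF_eq_cdf_gaussianReal]
    exact (cdf _).mono.measurable.comp (measurable_const_mul lam)
  have hint : Integrable (fun x => 2 * stdPhi x * stdPhiCDF (lam * x)) := by
    rw [stdPhi_eq_gaussianPDFReal]
    refine ((integrable_gaussianPDFReal 0 1).const_mul 2).mul_bdd hΦ.aestronglyMeasurable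
      (c := 1) (ae_of_all _ fun x => ?_)
    rw [stdPhiCDF_eq_cdf_gaussianReal, Real.norm_of_nonneg (cdf_nonneg _ _)]
    exact cdf_le_one _ _
  have hφ (x : ℝ) : 0 ≤ stdPhi x := stdPhi_eq_gaussianPDFReal ▸ gaussianPDFReal_nonneg 0 1 x
  have hΦ₀ (x : ℝ) : 0 ≤ stdPhiCDF x := stdPhiCDF_eq_cdf_gaussianReal ▸ cdf_nonneg _ x
  simp_rw [← ofReal_cdf, ← stdPhiCDF_eq_cdf_gaussianReal]
  rw [ofReal_integral_eq_lintegral_ofReal hint.integrableOn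
      (ae_of_all _ fun x => by have := hφ x; have := hΦ₀ (lam * x); positivity),
    gaussianReal_of_var_ne_zero 0 one_ne_zero,
    setLIntegral_withDensity_eq_setLIntegral_mul _ (measurable_gaussianPDF 0 1)
      hΦ.ennreal_ofReal hs,
    ← lintegral_const_mul _ ((measurable_gaussianPDF 0 1).mul hΦ.ennreal_ofReal)]
  refine setLIntegral_congr_fun hs fun x _ => ?_
  rw [Pi.mul_apply, gaussianPDF, ← stdPhi_eq_gaussianPDFReal, mul_assoc,
    ENNReal.ofReal_mul zero_le_two, ENNReal.ofReal_mul (hφ x), ENNReal.ofReal_ofNat]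

/-- if Z₁, Z₂ are independent standard normals, δ ∈ (−1,1) and
λ = δ/√(1−δ²), then X = δ|Z₁| + √(1−δ²) Z₂ has the skew-normal density 2φ(x)Φ(λx):
for every t, P(X ≤ t) = ∫_{−∞}^t 2 φ(x) Φ(λx) dx. -/
theorem skewNormal_stochastic_representation
    {Ω : Type*} [MeasurableSpace Ω] (μ : Measure Ω) [IsProbabilityMeasure μ]
    (Z₁ Z₂ : Ω → ℝ) (hZ₁ : Measurable Z₁) (hZ₂ : Measurable Z₂)
    (hlaw₁ : Measure.map Z₁ μ = gaussianReal 0 1)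
    (hlaw₂ : Measure.map Z₂ μ = gaussianReal 0 1)
    (hindep : IndepFun Z₁ Z₂ μ)
    (δ : ℝ) (hδ₁ : -1 < δ) (hδ₂ : δ < 1)
    (lam : ℝ) (hlam : lam = δ / Real.sqrt (1 - δ ^ 2)) :
    ∀ t : ℝ,
      μ {ω | δ * |Z₁ ω| + Real.sqrt (1 - δ ^ 2) * Z₂ ω ≤ t}
        = ENNReal.ofReal (∫ x in Set.Iic t, 2 * stdPhi x * stdPhiCDF (lam * x)) := by
  intro t
  set c := Real.sqrt (1 - δ ^ 2)
  have hc : 0 < c := Real.sqrt_pos.mpr (by nlinarith)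
  have hδc : δ ^ 2 + c ^ 2 = 1 := by rw [Real.sq_sqrt (by nlinarith)]; ring
  have hlaw : μ.map (fun ω => (Z₁ ω, Z₂ ω)) = (gaussianReal 0 1).prod (gaussianReal 0 1) := by
    rw [(indepFun_iff_map_prod_eq_prod_map_map hZ₁.aemeasurable hZ₂.aemeasurable).mp hindep,
      hlaw₁, hlaw₂]
  have hS : MeasurableSet {p : ℝ × ℝ | δ * |p.1| + c * p.2 ≤ t} :=
    measurableSet_le (by fun_prop) measurable_const
  calc μ {ω | δ * |Z₁ ω| + c * Z₂ ω ≤ t}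
      = (gaussianReal 0 1).prod (gaussianReal 0 1) {p | δ * |p.1| + c * p.2 ≤ t} := by
        rw [← hlaw, Measure.map_apply (hZ₁.prodMk hZ₂) hS]
        rfl
    _ = 2 * (gaussianReal 0 1).prod (gaussianReal 0 1)
          ({p | δ * |p.1| + c * p.2 ≤ t} ∩ {p | 0 ≤ p.1}) :=
        measure_eq_two_mul_inter_fst_nonneg measurePreserving_neg_fst_gaussianReal_prod
          gaussianReal_prod_setOf_fst_eq_zero hS (by simp)
    _ = 2 * (gaussianReal 0 1).prod (gaussianReal 0 1) {q | q.1 ∈ Iic t ∧ q.2 ≤ lam * q.1} := by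
        rw [setOf_abs_fst_le_inter_eq_preimage_rotation hc hδc, hlam,
          (measurePreserving_rotation_gaussianReal_prod hδc).measure_preimage
            (measurableSet_setOf_fst_mem_snd_le measurableSet_Iic
              (measurable_const_mul _)).nullMeasurableSet]
    _ = ENNReal.ofReal (∫ x in Set.Iic t, 2 * stdPhi x * stdPhiCDF (lam * x)) := by
        rw [Measure.prod_setOf_fst_mem_snd_le _ _ measurableSet_Iic (measurable_const_mul lam),
          ofReal_setIntegral_two_mul_stdPhi_mul_stdPhiCDF lam measurableSet_Iic]
end

section
/- Fix α > 0, λ ∈ ℝ, q ∈ (0,1), and Ξ > 0. Let Q ∈ ℝ satisfy ∫_{−∞}^{Q} 2 φ(x) Φ(λ x) dx = q, set η = αQ + √((αQ)² + 4) and β = 4Ξ/η². Then ∫_0^{Ξ} 2 φ(a(y;α,β)) Φ(λ a(y;α,β)) a'(y;α,β) dy = q. That is, in the quantile reparameterization skew-QBS(α,Ξ_q,λ) of the skew-BS distribution, the parameter Ξ_q is itself the 100q-th quantile of the distribution. -/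
open Real MeasureTheory Set

/-- The function a(y; α, β). -/
noncomputable def aBS (α β y : ℝ) : ℝ := (1 / α) * (Real.sqrt (y / β) - Real.sqrt (β / y))

/-- The derivative a'(y; α, β). -/
noncomputable def aBS' (α β y : ℝ) : ℝ :=
  (1 / (2 * α * y)) * (Real.sqrt (y / β) + Real.sqrt (β / y))

/-!
The map `y ↦ a(y; α, β)` is a smooth increasing bijection of `(0, ∞)` onto `ℝ`, with derivative
`a'`, so the skew-BS density is the pull-back of the `SN(λ)` density along it and
`P(Y ≤ Ξ) = P(X ≤ a(Ξ; α, β))`. Solving `a(y; α, β) = x` gives `√(y/β) = η/2` with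
`η = αx + √((αx)² + 4)` the positive root of `η² - 2αxη - 4 = 0`, i.e. `y = βη²/4`.
Hence the choice `β = 4Ξ/η²` with `x = Q` makes `a(Ξ; α, β) = Q`, and the probability is `q`.
-/

/-- The quantity `η` of the quantile reparameterization, as a function of `c = αQ`. -/
noncomputable def bsEta (c : ℝ) : ℝ := c + √(c ^ 2 + 4)

lemma bsEta_pos (c : ℝ) : 0 < bsEta c := by
  have h : |c| < √(c ^ 2 + 4) := by
    rw [← sqrt_sq_eq_abs]
    exact sqrt_lt_sqrt (sq_nonneg c) (by linarith)
  unfold bsEta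
  linarith [neg_abs_le c]

lemma bsEta_sq (c : ℝ) : bsEta c ^ 2 = 2 * c * bsEta c + 4 := by
  have h : √(c ^ 2 + 4) ^ 2 = c ^ 2 + 4 := sq_sqrt (by positivity)
  unfold bsEta
  linear_combination h

lemma hasDerivAt_aBS (α : ℝ) {β y : ℝ} (hβ : 0 < β) (hy : 0 < y) :
    HasDerivAt (aBS α β) (aBS' α β y) y := by
  have hdiv : HasDerivAt (fun y ↦ y / β) (1 / β) y := by
    simpa using (hasDerivAt_id y).div_const β
  have hinv : HasDerivAt (fun y ↦ β / y) (β * -(y ^ 2)⁻¹) y := by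
    simpa [div_eq_mul_inv] using (hasDerivAt_inv hy.ne').const_mul β
  have hsqrt_div := (hasDerivAt_sqrt (div_pos hy hβ).ne').comp y hdiv
  have hsqrt_inv := (hasDerivAt_sqrt (div_pos hβ hy).ne').comp y hinv
  refine ((hsqrt_div.sub hsqrt_inv).const_mul (1 / α)).congr_deriv ?_
  rw [show aBS' α β y = 1 / α * (1 / (2 * y) * (√(y / β) + √(β / y))) by unfold aBS'; ring]
  congr 1
  have hsy : √y ^ 2 = y := sq_sqrt hy.le
  have hsb : √β ^ 2 = β := sq_sqrt hβ.le
  have : 0 < √y := sqrt_pos.2 hy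
  have : 0 < √β := sqrt_pos.2 hβ
  rw [sqrt_div hy.le, sqrt_div hβ.le]
  field_simp
  linear_combination (β ^ 2 - y * β) * hsy + (y ^ 2 - y * β) * hsb

lemma aBS'_pos {α β y : ℝ} (hα : 0 < α) (hβ : 0 < β) (hy : 0 < y) : 0 < aBS' α β y := by
  unfold aBS'
  have : 0 < √(y / β) := sqrt_pos.2 (div_pos hy hβ)
  positivity

lemma strictMonoOn_aBS {α β : ℝ} (hα : 0 < α) (hβ : 0 < β) : StrictMonoOn (aBS α β) (Ioi 0) :=
  strictMonoOn_of_hasDerivWithinAt_pos (convex_Ioi 0)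
    (fun _ hy ↦ (hasDerivAt_aBS α hβ hy).continuousAt.continuousWithinAt)
    (fun _ hy ↦ (hasDerivAt_aBS α hβ (interior_subset hy)).hasDerivWithinAt)
    (fun _ hy ↦ aBS'_pos hα hβ (interior_subset hy))

lemma aBS_mul_bsEta_sq {α β : ℝ} (hα : α ≠ 0) (hβ : 0 < β) (x : ℝ) :
    aBS α β (β * bsEta (α * x) ^ 2 / 4) = x := by
  have hη := bsEta_pos (α * x)
  have e₁ : β * bsEta (α * x) ^ 2 / 4 / β = (bsEta (α * x) / 2) ^ 2 := by
    field_simp; norm_num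
  have e₂ : β / (β * bsEta (α * x) ^ 2 / 4) = (2 / bsEta (α * x)) ^ 2 := by
    field_simp; norm_num
  rw [aBS, e₁, e₂, sqrt_sq (by positivity), sqrt_sq (by positivity)]
  field_simp
  linear_combination bsEta_sq (α * x)

lemma image_aBS_Ioc {α β Ξ : ℝ} (hα : 0 < α) (hβ : 0 < β) (hΞ : 0 < Ξ) :
    aBS α β '' Ioc 0 Ξ = Iic (aBS α β Ξ) := by
  have hmono := strictMonoOn_aBS hα hβ
  ext x
  constructor
  · rintro ⟨y, ⟨hy₀, hyΞ⟩, rfl⟩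
    exact hmono.monotoneOn hy₀ hΞ hyΞ
  · intro hx
    have hy₀ : 0 < β * bsEta (α * x) ^ 2 / 4 := by have := bsEta_pos (α * x); positivity
    have hax := aBS_mul_bsEta_sq hα.ne' hβ x
    refine ⟨_, ⟨hy₀, ?_⟩, hax⟩
    rw [← hax] at hx
    exact (hmono.le_iff_le hy₀ hΞ).1 hx

lemma setIntegral_Ioc_comp_aBS_mul_aBS' (g : ℝ → ℝ) {α β Ξ : ℝ} (hα : 0 < α) (hβ : 0 < β)
    (hΞ : 0 < Ξ) :
    ∫ y in Ioc 0 Ξ, g (aBS α β y) * aBS' α β y = ∫ x in Iic (aBS α β Ξ), g x := by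
  rw [← image_aBS_Ioc hα hβ hΞ, integral_image_eq_integral_abs_deriv_smul measurableSet_Ioc
    (fun y hy ↦ (hasDerivAt_aBS α hβ hy.1).hasDerivWithinAt)
    ((strictMonoOn_aBS hα hβ).injOn.mono Ioc_subset_Ioi_self)]
  refine setIntegral_congr_fun measurableSet_Ioc fun y hy ↦ ?_
  rw [smul_eq_mul, abs_of_pos (aBS'_pos hα hβ hy.1), mul_comm]

theorem skewQBS_quantile_param_general (α lam q Ξ Q : ℝ) (hα : 0 < α) (hΞ : 0 < Ξ)
    (hQ : ∫ x in Set.Iic Q, 2 * stdPhi x * stdPhiCDF (lam * x) = q) :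
    ∫ y in Set.Ioc (0 : ℝ) Ξ,
        2 * stdPhi (aBS α (4 * Ξ / (α * Q + Real.sqrt ((α * Q) ^ 2 + 4)) ^ 2) y) *
          stdPhiCDF (lam * aBS α (4 * Ξ / (α * Q + Real.sqrt ((α * Q) ^ 2 + 4)) ^ 2) y) *
          aBS' α (4 * Ξ / (α * Q + Real.sqrt ((α * Q) ^ 2 + 4)) ^ 2) y = q := by
  change ∫ y in Ioc 0 Ξ, 2 * stdPhi (aBS α (4 * Ξ / bsEta (α * Q) ^ 2) y) *
    stdPhiCDF (lam * aBS α (4 * Ξ / bsEta (α * Q) ^ 2) y) * aBS' α (4 * Ξ / bsEta (α * Q) ^ 2) y = q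
  have hη := bsEta_pos (α * Q)
  have hβ : 0 < 4 * Ξ / bsEta (α * Q) ^ 2 := by positivity
  have haΞ : aBS α (4 * Ξ / bsEta (α * Q) ^ 2) Ξ = Q := by
    convert aBS_mul_bsEta_sq hα.ne' hβ Q using 2
    field_simp
  rw [setIntegral_Ioc_comp_aBS_mul_aBS' (fun x ↦ 2 * stdPhi x * stdPhiCDF (lam * x)) hα hβ hΞ,
    haΞ, hQ]

/-- in the quantile reparameterization skew-QBS(α, Ξ_q, λ), with
β = 4Ξ/η² and η = αQ + √((αQ)² + 4) where Q is the q-quantile of SN(λ), the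
parameter Ξ is itself the 100q-th quantile of the distribution:
∫_0^Ξ 2 φ(a(y;α,β)) Φ(λ a(y;α,β)) a'(y;α,β) dy = q. -/
theorem skewQBS_quantile_param (α lam q Ξ Q : ℝ) (hα : 0 < α) (hΞ : 0 < Ξ)
    (hq₁ : 0 < q) (hq₂ : q < 1)
    (hQ : ∫ x in Set.Iic Q, 2 * stdPhi x * stdPhiCDF (lam * x) = q) :
    ∫ y in Set.Ioc (0 : ℝ) Ξ,
        2 * stdPhi (aBS α (4 * Ξ / (α * Q + Real.sqrt ((α * Q) ^ 2 + 4)) ^ 2) y) *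
          stdPhiCDF (lam * aBS α (4 * Ξ / (α * Q + Real.sqrt ((α * Q) ^ 2 + 4)) ^ 2) y) *
          aBS' α (4 * Ξ / (α * Q + Real.sqrt ((α * Q) ^ 2 + 4)) ^ 2) y = q :=
  skewQBS_quantile_param_general α lam q Ξ Q hα hΞ hQ
end

section
/- (Reciprocal property, Proposition on skew-QBS properties, item 2.) For all α > 0, β > 0, λ ∈ ℝ and y > 0, (1/y²) f(1/y; α, β, λ) = f(y; α, 1/β, −λ). Consequently, if Y has the skew-BS(α,β,λ) density then Y⁻¹ has the skew-BS(α,β⁻¹,−λ) density; in the quantile parameterization, if Y ∼ skew-QBS(α,Ξ_q,λ) then Y⁻¹ ∼ skew-QBS(α,Ξ_q⁻¹,−λ). -/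
open Real MeasureTheory Set

/-- The skew-BS(α, β, λ) density. -/
noncomputable def skewBSpdf (α β lam y : ℝ) : ℝ :=
  2 * stdPhi (aBS α β y) * stdPhiCDF (lam * aBS α β y) * aBS' α β y

/-! Passing from `(y, β)` to `(y⁻¹, β⁻¹)` swaps `√(y/β)` and `√(β/y)`, so `a` changes sign while
`a'` picks up the Jacobian factor `y²`; since `φ` is even and the skewing argument `λ a` is
preserved by also negating `λ`, the density transforms exactly like that of `Y⁻¹`. -/

theorem stdPhi_neg (x : ℝ) : stdPhi (-x) = stdPhi x := by
  rw [stdPhi, stdPhi, neg_sq]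

section Reciprocal

variable (α β y : ℝ)

theorem aBS_inv : aBS α β y⁻¹ = -aBS α β⁻¹ y := by
  have h₁ : y⁻¹ / β = (y / β⁻¹)⁻¹ := by simp [div_eq_mul_inv, mul_comm]
  have h₂ : β / y⁻¹ = y / β⁻¹ := by simp [div_eq_mul_inv, mul_comm]
  have h₃ : β⁻¹ / y = (y / β⁻¹)⁻¹ := by simp [div_eq_mul_inv, mul_comm]
  rw [aBS, aBS, h₁, h₂, h₃, sqrt_inv]
  ring

theorem aBS'_inv : aBS' α β y⁻¹ = y ^ 2 * aBS' α β⁻¹ y := by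
  have h₁ : y⁻¹ / β = β⁻¹ / y := by simp [div_eq_mul_inv, mul_comm]
  have h₂ : β / y⁻¹ = y / β⁻¹ := by simp [div_eq_mul_inv, mul_comm]
  rw [aBS', aBS', h₁, h₂]
  rcases eq_or_ne y 0 with rfl | hy
  · simp
  · field_simp
    ring

end Reciprocal

theorem skewBSpdf_inv (α β lam y : ℝ) :
    skewBSpdf α β lam y⁻¹ = y ^ 2 * skewBSpdf α β⁻¹ (-lam) y := by
  rw [skewBSpdf, skewBSpdf, aBS_inv, aBS'_inv, stdPhi_neg, mul_neg, neg_mul]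
  ring

theorem skewBS_reciprocal_general (α β lam y : ℝ) (hy : 0 < y) :
    (1 / y ^ 2) * skewBSpdf α β lam (1 / y) = skewBSpdf α β⁻¹ (-lam) y := by
  rw [one_div y, skewBSpdf_inv, one_div, inv_mul_cancel_left₀ (pow_ne_zero 2 hy.ne')]

/-- reciprocal property: for all α, β > 0, λ ∈ ℝ and y > 0,
(1/y²) f(1/y; α, β, λ) = f(y; α, 1/β, −λ); i.e. if Y ∼ skew-BS(α,β,λ) then
Y⁻¹ ∼ skew-BS(α,β⁻¹,−λ) (equivalently, skew-QBS(α,Ξ_q⁻¹,−λ)). -/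
theorem skewBS_reciprocal (α β lam y : ℝ) (hα : 0 < α) (hβ : 0 < β) (hy : 0 < y) :
    (1 / y ^ 2) * skewBSpdf α β lam (1 / y) = skewBSpdf α β⁻¹ (-lam) y :=
  skewBS_reciprocal_general α β lam y hy
end
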